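/- Let θ₁, θ₂, θ₃, θ₄, θ₅ be real numbers with 0 ≤ θ_j ≤ π for each j. Then (1/8)(Σ_{j=1}^{5} θ_j⁴ + 4 Σ_{1≤j<k≤5} θ_j² θ_k² − 24π² Σ_{j=1}^{5} θ_j² + 80π⁴) > 0. -/

import Mathlib

/-!
With `s_j = θ_j²` and `S = Σ s_j`, the bracket equals `2 S² - Σ s_j² - 24 π² S + 80 π⁴`,
because `2 Σ_{j<k} s_j s_k = S² - Σ s_j²`. The cone-angle bound `s_j ≤ π²` gives
`Σ s_j² ≤ π² S`, so the bracket is at least `2 S² - 25 π² S + 80 π⁴`, a quadratic in `S`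
with negative discriminant `625 - 640`.
-/

open Real Finset

theorem Finset.sq_sum_eq_sum_sq_add_two_mul_sum_lt {ι R : Type*} [LinearOrder ι] [CommSemiring R]
    (s : Finset ι) (a : ι → R) :
    (∑ i ∈ s, a i) ^ 2 = ∑ i ∈ s, a i ^ 2 + 2 * ∑ i ∈ s, ∑ j ∈ s with i < j, a i * a j := by
  have hsplit : ∀ i ∈ s, ∑ j ∈ s, a i * a j =
      ∑ j ∈ s with j < i, a i * a j + a i ^ 2 + ∑ j ∈ s with i < j, a i * a j := by
    intro i hi
    have hterm : ∀ j, a i * a j = (if j < i then a i * a j else 0) +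
        (if i = j then a i * a j else 0) + (if i < j then a i * a j else 0) := by
      intro j
      rcases lt_trichotomy j i with h | rfl | h
      · simp [h, h.ne', h.not_gt]
      · simp
      · simp [h, h.ne, h.not_gt]
    rw [sum_congr rfl fun j _ => hterm j, sum_add_distrib, sum_add_distrib, sum_ite_eq, if_pos hi,
      ← sum_filter, ← sum_filter, sq]
  have hswap : ∑ i ∈ s, ∑ j ∈ s with j < i, a i * a j = ∑ i ∈ s, ∑ j ∈ s with i < j, a i * a j := by
    rw [sum_comm' (t' := s) (s' := fun j => s.filter (j < ·)) (by simp; tauto)]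
    exact sum_congr rfl fun i _ => sum_congr rfl fun j _ => mul_comm _ _
  rw [sq, sum_mul_sum, sum_congr rfl hsplit, sum_add_distrib, sum_add_distrib, hswap]
  ring

theorem Finset.sum_sq_le_mul_sum {ι R : Type*} [Semiring R] [PartialOrder R] [IsOrderedRing R]
    {s : Finset ι} {a : ι → R} {c : R} (h0 : ∀ i ∈ s, 0 ≤ a i) (hc : ∀ i ∈ s, a i ≤ c) :
    ∑ i ∈ s, a i ^ 2 ≤ c * ∑ i ∈ s, a i := by
  rw [mul_sum]
  exact sum_le_sum fun i hi => by
    rw [sq]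
    exact mul_le_mul_of_nonneg_right (hc i hi) (h0 i hi)

theorem two_mul_sq_sub_add_pos (x c : ℝ) (hc : c ≠ 0) :
    0 < 2 * x ^ 2 - 25 * c * x + 80 * c ^ 2 := by
  nlinarith [sq_nonneg (x - 25 / 4 * c), sq_pos_of_ne_zero hc]

/-- If the cone angles `θ₁,…,θ₅` satisfy `0 ≤ θ_j ≤ π` for each `j`, then the evaluation
of Mirzakhani's genus-zero five-point volume polynomial at `L_j = iθ_j`, namely
`(1/8)(Σ θ_j⁴ + 4 Σ_{j<k} θ_j²θ_k² − 24π² Σ θ_j² + 80π⁴)`, is positive. -/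
theorem stmt_5 (θ : Fin 5 → ℝ) (h0 : ∀ j, 0 ≤ θ j) (hπ : ∀ j, θ j ≤ π) :
    0 < (1 / 8 : ℝ) * ((∑ j, θ j ^ 4) +
        4 * ∑ j, ∑ k ∈ Finset.univ.filter (fun k => j < k), θ j ^ 2 * θ k ^ 2 -
        24 * π ^ 2 * ∑ j, θ j ^ 2 + 80 * π ^ 4) := by
  have hquartic : ∑ j, θ j ^ 4 = ∑ j, (θ j ^ 2) ^ 2 := by simp only [← pow_mul]
  have hpairs := sq_sum_eq_sum_sq_add_two_mul_sum_lt univ fun j => θ j ^ 2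
  have hbound : ∑ j, (θ j ^ 2) ^ 2 ≤ π ^ 2 * ∑ j, θ j ^ 2 :=
    sum_sq_le_mul_sum (fun j _ => sq_nonneg (θ j)) fun j _ => pow_le_pow_left₀ (h0 j) (hπ j) 2
  have hquad := two_mul_sq_sub_add_pos (∑ j, θ j ^ 2) (π ^ 2) (pow_ne_zero 2 pi_ne_zero)
  linarith
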